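/- Let V and E be finite types with maps s, r : E → V and adjacency matrix A, let ρ be a permutation of V, and let σ be one of the nontrivial disjoint cycles of ρ whose support S is a proper subset of V. Let V' = V \ S, let E' be the set of edges with both source and range in V', let A' be the adjacency matrix of the restricted graph, and let ρ' be the restriction of ρ to a permutation of V'. Then Σ_D (−1)^{c(D)}, summed over circuit configurations D of (V, E) with ρ_D = ρ, equals −(∏_{v ∈ S} A v (ρ v)) · Σ_{D'} (−1)^{c(D')}, the latter sum ranging over circuit configurations D' of (V', E') with induced permutation ρ'. -/

import Mathlib

open scoped Classical

/-- The adjacency matrix of the finite directed multigraph with vertices `V`, edges `E`,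
source map `s` and range map `r`: the `(v, w)` entry is the number of edges from `v` to `w`. -/
noncomputable def adjMatrix {V E : Type*} (s r : E → V) : Matrix V V ℤ :=
  Matrix.of fun v w => (Nat.card {e : E // s e = v ∧ r e = w} : ℤ)

/-- A circuit configuration: a finset of edges on which `s` and `r` are injective and
whose `s`-image equals its `r`-image.  Such finsets are precisely the unions of the
circuits of vertex-disjoint sets of directed circuits. -/
def IsCircuitConfig {V E : Type*} [DecidableEq V] (s r : E → V) (D : Finset E) : Prop :=
  Set.InjOn s ↑D ∧ Set.InjOn r ↑D ∧ D.image s = D.image r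

/-- `ρ` is the permutation induced by the finset of edges `D`: it sends `s e` to `r e`
for each `e ∈ D` and fixes every vertex outside the `s`-image of `D`. -/
def Induces {V E : Type*} [DecidableEq V] (s r : E → V) (D : Finset E)
    (ρ : Equiv.Perm V) : Prop :=
  (∀ e ∈ D, ρ (s e) = r e) ∧ ∀ v ∉ D.image s, ρ v = v

/-- The permutation induced by a circuit configuration `D` (the identity if no
permutation is induced by `D`). -/
noncomputable def inducedPerm {V E : Type*} [DecidableEq V] (s r : E → V)
    (D : Finset E) : Equiv.Perm V :=
  if h : ∃ ρ : Equiv.Perm V, Induces s r D ρ then h.choose else 1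

/-- The setoid on `V` whose classes are the orbits of the permutation `ρ`. -/
def sameCycleSetoid {V : Type*} (ρ : Equiv.Perm V) : Setoid V where
  r := ρ.SameCycle
  iseqv := ⟨fun x => Equiv.Perm.SameCycle.refl ρ x,
    Equiv.Perm.SameCycle.symm, Equiv.Perm.SameCycle.trans⟩

/-- The number of circuits of a configuration `D` with induced permutation `ρ`:
the number of orbits of `ρ` that meet the `s`-image of `D`. -/
noncomputable def numCircuits {V E : Type*} (s : E → V) (D : Finset E)
    (ρ : Equiv.Perm V) : ℕ :=
  (Quotient.mk (sameCycleSetoid ρ) '' (s '' ↑D)).ncard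

/-!
A configuration `D` inducing `ρ` has, for every vertex `v` of the support `S` of `σ`, exactly one
edge leaving `v`, and it goes to `ρ v`; since `ρ` preserves `S`, every other edge of `D` avoids `S`,
and these edges form a configuration of the restricted graph inducing `ρ'`. Conversely, any choice
of edges `v → ρ v` over `S` glues with any such configuration of the restricted graph. So the
configurations inducing `ρ` are in bijection with pairs of these, there are
`∏ v ∈ S, A v (ρ v)` choices of edges over `S`, and gluing adds exactly one circuit, namely `σ`,
which flips the sign.
-/

open Finset

section Induces

variable {V E : Type*} [DecidableEq V] {s r : E → V} {D : Finset E} {ρ : Equiv.Perm V}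

theorem Induces.unique {ρ₁ ρ₂ : Equiv.Perm V} (h₁ : Induces s r D ρ₁) (h₂ : Induces s r D ρ₂) :
    ρ₁ = ρ₂ := by
  ext v
  by_cases hv : v ∈ D.image s
  · obtain ⟨e, he, rfl⟩ := mem_image.mp hv
    rw [h₁.1 e he, h₂.1 e he]
  · rw [h₁.2 v hv, h₂.2 v hv]

theorem Induces.support_subset [Fintype V] (h : Induces s r D ρ) : ρ.support ⊆ D.image s := by
  intro v hv
  by_contra hv'
  exact Equiv.Perm.mem_support.mp hv (h.2 v hv')

theorem IsCircuitConfig.exists_induces (hD : IsCircuitConfig s r D) :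
    ∃ ρ, Induces s r D ρ := by
  obtain ⟨hs, hr, him⟩ := hD
  have him' : r '' D = s '' D := by simpa using congrArg ((↑) : Finset V → Set V) him.symm
  let τ : Equiv.Perm (s '' D) :=
    ((hs.bijOn_image.equiv s).symm.trans (hr.bijOn_image.equiv r)).trans (Equiv.setCongr him')
  refine ⟨Equiv.Perm.ofSubtype τ, fun e he => ?_, fun v hv => ?_⟩
  · rw [Equiv.Perm.ofSubtype_apply_of_mem τ (Set.mem_image_of_mem s he)]
    have : (hs.bijOn_image.equiv s).symm ⟨s e, Set.mem_image_of_mem s he⟩ = ⟨e, he⟩ :=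
      (Equiv.symm_apply_eq _).mpr rfl
    simp only [τ, Equiv.trans_apply, this]
    rfl
  · exact Equiv.Perm.ofSubtype_apply_of_not_mem τ (by simpa using hv)

theorem IsCircuitConfig.inducedPerm_eq_iff (hD : IsCircuitConfig s r D) :
    inducedPerm s r D = ρ ↔ Induces s r D ρ := by
  have h := hD.exists_induces
  rw [inducedPerm, dif_pos h]
  exact ⟨fun h' => h' ▸ h.choose_spec, h.choose_spec.unique⟩

theorem Induces.isCircuitConfig (h : Induces s r D ρ) (hs : Set.InjOn s D) :
    IsCircuitConfig s r D := by
  have hr : Set.EqOn (ρ ∘ s) r D := fun e he => h.1 e he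
  refine ⟨hs, (ρ.injective.comp_injOn hs).congr hr, ?_⟩
  have hfix : {v | ρ v ≠ v} ⊆ ↑(D.image s) := fun v hv => by_contra fun hv' => hv (h.2 v hv')
  rw [← image_congr hr, ← image_image]
  exact (map_perm hfix).symm.trans (map_eq_image _ _)

theorem isCircuitConfig_and_inducedPerm_eq_iff :
    IsCircuitConfig s r D ∧ inducedPerm s r D = ρ ↔ Set.InjOn s D ∧ Induces s r D ρ :=
  ⟨fun ⟨hD, h⟩ => ⟨hD.1, hD.inducedPerm_eq_iff.mp h⟩,
    fun ⟨hs, h⟩ => ⟨h.isCircuitConfig hs, (h.isCircuitConfig hs).inducedPerm_eq_iff.mpr h⟩⟩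

end Induces

section EdgeSections

variable {V E : Type*} [DecidableEq V] (s r : E → V)

def IsEdgeSection (ρ : Equiv.Perm V) (S : Finset V) (D : Finset E) : Prop :=
  Set.InjOn s D ∧ D.image s = S ∧ ∀ e ∈ D, r e = ρ (s e)

variable [Fintype E]

theorem card_filter_injOn_image_eq_prod (S : Finset V) (q : E → Prop) [DecidablePred q] :
    #{D : Finset E | Set.InjOn s D ∧ D.image s = S ∧ ∀ e ∈ D, q e} =
      ∏ v ∈ S, #{e | s e = v ∧ q e} := by
  rw [← card_pi]
  symm
  refine card_bij (fun f _ => S.attach.image fun v => f v.1 v.2) ?_ ?_ ?_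
  · intro f hf
    simp only [mem_pi, mem_filter, mem_univ, true_and] at hf
    simp only [mem_filter, mem_univ, true_and]
    refine ⟨?_, ?_, ?_⟩
    · intro a ha b hb hab
      obtain ⟨v, -, rfl⟩ := mem_image.mp ha
      obtain ⟨w, -, rfl⟩ := mem_image.mp hb
      rw [(hf v.1 v.2).1, (hf w.1 w.2).1] at hab
      rw [Subtype.ext hab]
    · rw [image_image, image_congr fun v _ => (hf v.1 v.2).1, attach_image_val]
    · simp only [mem_image, mem_attach, true_and, forall_exists_index]
      rintro _ v rfl
      exact (hf v.1 v.2).2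
  · intro f hf g hg hfg
    funext v hv
    simp only [mem_pi, mem_filter, mem_univ, true_and] at hf hg
    obtain ⟨w, -, hw⟩ := mem_image.mp (hfg ▸ mem_image_of_mem _ (mem_attach S ⟨v, hv⟩))
    have hwv : w.1 = v := by rw [← (hg w.1 w.2).1, hw, (hf v hv).1]
    subst hwv
    exact hw.symm
  · intro D hD
    simp only [mem_filter, mem_univ, true_and] at hD
    obtain ⟨hinj, himg, hq⟩ := hD
    have : ∀ v ∈ S, ∃ e ∈ D, s e = v := fun v hv => mem_image.mp (himg ▸ hv)
    choose f hfD hfs using this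
    refine ⟨f, mem_pi.mpr fun v hv => mem_filter.mpr ⟨mem_univ _, hfs v hv, hq _ (hfD v hv)⟩, ?_⟩
    ext e
    simp only [mem_image, mem_attach, true_and]
    constructor
    · rintro ⟨v, rfl⟩
      exact hfD v.1 v.2
    · intro he
      have hv : s e ∈ S := himg ▸ mem_image_of_mem s he
      exact ⟨⟨s e, hv⟩, hinj (hfD _ hv) he (hfs _ hv)⟩

theorem adjMatrix_apply (v w : V) : adjMatrix s r v w = #{e | s e = v ∧ r e = w} := by
  simp [adjMatrix, Nat.card_eq_fintype_card, Fintype.card_subtype]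

theorem card_isEdgeSection (ρ : Equiv.Perm V) (S : Finset V) :
    (#{D : Finset E | IsEdgeSection s r ρ S D} : ℤ) = ∏ v ∈ S, adjMatrix s r v (ρ v) := by
  have hfilter : univ.filter (IsEdgeSection s r ρ S) =
      univ.filter fun D : Finset E => Set.InjOn s D ∧ D.image s = S ∧ ∀ e ∈ D, r e = ρ (s e) :=
    filter_congr fun _ _ => Iff.rfl
  rw [hfilter, card_filter_injOn_image_eq_prod]
  push_cast
  refine prod_congr rfl fun v _ => ?_
  rw [adjMatrix_apply]
  congr 2
  exact filter_congr fun e _ => and_congr_right fun h => by rw [h]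

end EdgeSections

section Orbits

variable {V : Type*} {ρ : Equiv.Perm V}

theorem mem_support_iff_sameCycle_of_mem_cycleFactorsFinset [Fintype V] [DecidableEq V]
    {σ : Equiv.Perm V} (hσ : σ ∈ ρ.cycleFactorsFinset) {v w : V} (hv : v ∈ σ.support) :
    w ∈ σ.support ↔ ρ.SameCycle v w := by
  obtain rfl := Equiv.Perm.cycle_is_cycleOf hv hσ
  rw [Equiv.Perm.mem_support_cycleOf_iff,
    and_iff_left (Equiv.Perm.mem_support_cycleOf_iff.mp hv).2]

theorem ncard_image_mk_union_support [Fintype V] [DecidableEq V] {σ : Equiv.Perm V}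
    (hσ : σ ∈ ρ.cycleFactorsFinset) {X : Set V} (hX : Disjoint X σ.support) :
    (Quotient.mk (sameCycleSetoid ρ) '' (↑σ.support ∪ X)).ncard =
      (Quotient.mk (sameCycleSetoid ρ) '' X).ncard + 1 := by
  obtain ⟨v, hv⟩ := (Equiv.Perm.mem_cycleFactorsFinset_iff.mp hσ).1.nonempty_support
  have hS : Quotient.mk (sameCycleSetoid ρ) '' σ.support = {Quotient.mk _ v} := by
    refine (Set.Nonempty.subset_singleton_iff (Set.Nonempty.image _ ⟨v, hv⟩)).mp ?_
    rintro _ ⟨w, hw, rfl⟩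
    exact Quotient.sound ((mem_support_iff_sameCycle_of_mem_cycleFactorsFinset hσ hv).mp hw).symm
  rw [Set.image_union, hS, Set.singleton_union, Set.ncard_insert_of_notMem]
  rintro ⟨x, hx, hxv⟩
  exact Set.disjoint_left.mp hX hx
    ((mem_support_iff_sameCycle_of_mem_cycleFactorsFinset hσ hv).mpr (Quotient.exact hxv).symm)

theorem sameCycle_iff_of_coe_apply {p : V → Prop} {ρ' : Equiv.Perm (Subtype p)}
    (hρ' : ∀ w, (ρ' w : V) = ρ w) {a b : Subtype p} :
    ρ'.SameCycle a b ↔ ρ.SameCycle a b := by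
  have hp : ∀ x, p (ρ x) ↔ p x := by
    refine fun x => ⟨fun hx => ?_, fun hx => hρ' ⟨x, hx⟩ ▸ (ρ' ⟨x, hx⟩).2⟩
    have : ρ (ρ'.symm ⟨ρ x, hx⟩) = ρ x := by rw [← hρ', Equiv.apply_symm_apply]
    exact ρ.injective this ▸ (ρ'.symm ⟨ρ x, hx⟩).2
  obtain rfl : ρ' = ρ.subtypePerm hp := Equiv.ext fun w => Subtype.ext (hρ' w)
  exact Equiv.Perm.sameCycle_subtypePerm

theorem ncard_image_mk_image_val {p : V → Prop} {ρ' : Equiv.Perm (Subtype p)}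
    (hρ' : ∀ w, (ρ' w : V) = ρ w) (X : Set (Subtype p)) :
    (Quotient.mk (sameCycleSetoid ρ) '' (Subtype.val '' X)).ncard =
      (Quotient.mk (sameCycleSetoid ρ') '' X).ncard := by
  let f : Quotient (sameCycleSetoid ρ') → Quotient (sameCycleSetoid ρ) :=
    Quotient.map Subtype.val fun _ _ => (sameCycle_iff_of_coe_apply hρ').mp
  have hf : f.Injective := by
    rintro ⟨a⟩ ⟨b⟩ h
    exact Quotient.sound ((sameCycle_iff_of_coe_apply hρ').mpr (Quotient.exact h))
  rw [← Set.ncard_image_of_injective _ hf, Set.image_image, Set.image_image]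
  rfl

end Orbits

section Restriction

variable {V E : Type*} [DecidableEq V] {s r : E → V} {ρ : Equiv.Perm V} {S : Finset V}
  {ρ' : Equiv.Perm {w : V // w ∉ S}} {D D₀ : Finset E} {D' : Finset {e : E // s e ∉ S ∧ r e ∉ S}}

def restrictSource (s r : E → V) (S : Finset V) :
    {e : E // s e ∉ S ∧ r e ∉ S} → {w : V // w ∉ S} :=
  fun e => ⟨s e.1, e.2.1⟩

def restrictRange (s r : E → V) (S : Finset V) :
    {e : E // s e ∉ S ∧ r e ∉ S} → {w : V // w ∉ S} :=
  fun e => ⟨r e.1, e.2.2⟩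

def restrictEdges (s r : E → V) (S : Finset V) (D : Finset E) :
    Finset {e : E // s e ∉ S ∧ r e ∉ S} :=
  D.subtype fun e => s e ∉ S ∧ r e ∉ S

theorem Set.InjOn.restrictEdges (hs : Set.InjOn s D) :
    Set.InjOn (restrictSource s r S) (restrictEdges s r S D) := fun _ ha _ hb h =>
  Subtype.ext (hs (mem_subtype.mp ha) (mem_subtype.mp hb) (congrArg Subtype.val h))

theorem Induces.restrict (hS : ∀ v, ρ v ∈ S ↔ v ∈ S) (hρ' : ∀ w, (ρ' w : V) = ρ w)
    (hD : Induces s r D ρ) :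
    Induces (restrictSource s r S) (restrictRange s r S) (restrictEdges s r S D) ρ' := by
  refine ⟨fun e he => Subtype.ext ?_, fun w hw => Subtype.ext ?_⟩
  · rw [hρ']
    exact hD.1 e (mem_subtype.mp he)
  · rw [hρ']
    refine hD.2 w fun hw' => hw ?_
    obtain ⟨e, he, hew⟩ := mem_image.mp hw'
    have hse : s e ∉ S := hew ▸ w.2
    refine mem_image.mpr ⟨⟨e, hse, ?_⟩, mem_subtype.mpr he, Subtype.ext hew⟩
    rw [← hD.1 e he, hS]
    exact hse

theorem filter_union_map_restrictEdges (hS : ∀ v, ρ v ∈ S ↔ v ∈ S) (hD : Induces s r D ρ) :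
    D.filter (s · ∈ S) ∪ (restrictEdges s r S D).map (Function.Embedding.subtype _) = D := by
  rw [restrictEdges, subtype_map, ← filter_or]
  refine filter_true_of_mem fun e he => or_iff_not_imp_left.mpr fun hse => ⟨hse, ?_⟩
  rw [← hD.1 e he, hS]
  exact hse

theorem Induces.isEdgeSection_filter [Fintype V] (hSρ : S ⊆ ρ.support) (hs : Set.InjOn s D)
    (hD : Induces s r D ρ) : IsEdgeSection s r ρ S (D.filter (s · ∈ S)) := by
  refine ⟨hs.mono (filter_subset _ _), ?_, fun e he => (hD.1 e (mem_filter.mp he).1).symm⟩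
  rw [← filter_image (p := (· ∈ S)), filter_mem_eq_inter,
    inter_eq_right.mpr (hSρ.trans hD.support_subset)]

theorem injOn_induces_union (hρ' : ∀ w, (ρ' w : V) = ρ w) (hD₀ : IsEdgeSection s r ρ S D₀)
    (hD' : Set.InjOn (restrictSource s r S) D' ∧
      Induces (restrictSource s r S) (restrictRange s r S) D' ρ') :
    Set.InjOn s ↑(D₀ ∪ D'.map (Function.Embedding.subtype _)) ∧
      Induces s r (D₀ ∪ D'.map (Function.Embedding.subtype _)) ρ := by
  obtain ⟨hinj₀, himg₀, hr₀⟩ := hD₀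
  obtain ⟨hinj', hind'⟩ := hD'
  have hsep : ∀ x ∈ D₀, ∀ y ∈ D'.map (Function.Embedding.subtype _), s x ≠ s y := by
    intro x hx _ hy hxy
    obtain ⟨y, -, rfl⟩ := mem_map.mp hy
    exact y.2.1 (hxy ▸ himg₀.subset (mem_image_of_mem s hx))
  refine ⟨?_, fun e he => ?_, fun v hv => ?_⟩
  · rw [coe_union, Set.injOn_union (Set.disjoint_left.mpr fun x hx hx' => hsep x hx x hx' rfl)]
    refine ⟨hinj₀, ?_, hsep⟩
    intro _ ha _ hb h
    obtain ⟨a, ha', rfl⟩ := mem_map.mp ha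
    obtain ⟨b, hb', rfl⟩ := mem_map.mp hb
    exact congrArg Subtype.val (hinj' ha' hb' (Subtype.ext h))
  · rcases mem_union.mp he with he | he
    · exact (hr₀ e he).symm
    · obtain ⟨e, he', rfl⟩ := mem_map.mp he
      exact (hρ' _).symm.trans (congrArg Subtype.val (hind'.1 e he'))
  · rw [image_union, mem_union, himg₀, not_or] at hv
    have hfix : ρ' ⟨v, hv.1⟩ = ⟨v, hv.1⟩ := by
      refine hind'.2 _ fun h => hv.2 ?_
      obtain ⟨e, he, hev⟩ := mem_image.mp h
      exact mem_image.mpr ⟨e, mem_map_of_mem _ he, congrArg Subtype.val hev⟩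
    exact (hρ' _).symm.trans (congrArg Subtype.val hfix)

theorem filter_union_map (himg : D₀.image s = S) :
    (D₀ ∪ D'.map (Function.Embedding.subtype _)).filter (s · ∈ S) = D₀ := by
  rw [filter_union, filter_true_of_mem fun e he => himg.subset (mem_image_of_mem s he),
    filter_false_of_mem, union_empty]
  intro e he
  obtain ⟨e, -, rfl⟩ := mem_map.mp he
  exact e.2.1

theorem restrictEdges_union_map (himg : D₀.image s = S) :
    restrictEdges s r S (D₀ ∪ D'.map (Function.Embedding.subtype _)) = D' := by
  ext e
  have he : e.1 ∉ D₀ := fun h => e.2.1 (himg.subset (mem_image_of_mem s h))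
  rw [restrictEdges, mem_subtype, mem_union, or_iff_right he]
  exact mem_map' _

end Restriction

theorem numCircuits_union_map {V E : Type*} [Fintype V] [DecidableEq V] {s r : E → V}
    {ρ σ : Equiv.Perm V} (hσ : σ ∈ ρ.cycleFactorsFinset) {ρ' : Equiv.Perm {w : V // w ∉ σ.support}}
    (hρ' : ∀ w, (ρ' w : V) = ρ w) {D₀ : Finset E}
    {D' : Finset {e : E // s e ∉ σ.support ∧ r e ∉ σ.support}} (himg : D₀.image s = σ.support) :
    numCircuits s (D₀ ∪ D'.map (Function.Embedding.subtype _)) ρ =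
      numCircuits (restrictSource s r σ.support) D' ρ' + 1 := by
  have : s '' ↑(D₀ ∪ D'.map (Function.Embedding.subtype _)) =
      ↑σ.support ∪ Subtype.val '' (restrictSource s r σ.support '' D') := by
    rw [coe_union, Set.image_union, ← coe_image, himg, coe_map, Set.image_image, Set.image_image]
    rfl
  rw [numCircuits, numCircuits, this, ncard_image_mk_union_support hσ,
    ncard_image_mk_image_val hρ']
  exact Set.disjoint_left.mpr fun _ ⟨w, _, hw⟩ => hw ▸ w.2

theorem sum_configs_eq_sum_isEdgeSection_product {V E : Type*} [Fintype V] [Fintype E]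
    [DecidableEq V] {s r : E → V} {ρ σ : Equiv.Perm V} (hσ : σ ∈ ρ.cycleFactorsFinset)
    {ρ' : Equiv.Perm {w : V // w ∉ σ.support}} (hρ' : ∀ w, (ρ' w : V) = ρ w) :
    ∑ D ∈ univ.filter (fun D : Finset E => Set.InjOn s D ∧ Induces s r D ρ),
        (-1 : ℤ) ^ numCircuits s D ρ =
      ∑ q ∈ univ.filter (IsEdgeSection s r ρ σ.support) ×ˢ
          univ.filter (fun D' : Finset {e : E // s e ∉ σ.support ∧ r e ∉ σ.support} =>
            Set.InjOn (restrictSource s r σ.support) D' ∧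
            Induces (restrictSource s r σ.support) (restrictRange s r σ.support) D' ρ'),
        -(-1 : ℤ) ^ numCircuits (restrictSource s r σ.support) q.2 ρ' := by
  have hS := Equiv.Perm.mem_cycleFactorsFinset_support hσ
  symm
  refine sum_nbij' (fun q => q.1 ∪ q.2.map (Function.Embedding.subtype _))
    (fun D => (D.filter (s · ∈ σ.support), restrictEdges s r σ.support D)) ?_ ?_ ?_ ?_ ?_
  all_goals simp only [mem_product, mem_filter_univ]
  · exact fun q h => injOn_induces_union hρ' h.1 h.2
  · exact fun D h => ⟨h.2.isEdgeSection_filter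
      (Equiv.Perm.mem_cycleFactorsFinset_support_le hσ) h.1, h.1.restrictEdges, h.2.restrict hS hρ'⟩
  · exact fun q h => Prod.ext (filter_union_map h.1.2.1) (restrictEdges_union_map h.1.2.1)
  · exact fun D h => filter_union_map_restrictEdges hS h.2
  · intro q h
    rw [numCircuits_union_map hσ hρ' h.1.2.1, pow_succ, mul_neg_one]

theorem signed_count_inductive_step_general {V E : Type*} [Fintype V] [Fintype E] [DecidableEq V]
    (s r : E → V) (ρ : Equiv.Perm V) (σ : Equiv.Perm V)
    (hσ : σ ∈ ρ.cycleFactorsFinset)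
    (ρ' : Equiv.Perm {w : V // w ∉ σ.support})
    (hρ' : ∀ w : {w : V // w ∉ σ.support}, (ρ' w : V) = ρ (w : V)) :
    ∑ D ∈ Finset.univ.filter
        (fun D : Finset E => IsCircuitConfig s r D ∧ inducedPerm s r D = ρ),
      (-1 : ℤ) ^ numCircuits s D ρ =
    -(∏ v ∈ σ.support, adjMatrix s r v (ρ v)) *
      ∑ D' ∈ Finset.univ.filter
          (fun D' : Finset {e : E // s e ∉ σ.support ∧ r e ∉ σ.support} =>
            IsCircuitConfig (fun e => (⟨s e.1, e.2.1⟩ : {w : V // w ∉ σ.support}))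
                (fun e => (⟨r e.1, e.2.2⟩ : {w : V // w ∉ σ.support})) D' ∧
              inducedPerm (fun e => (⟨s e.1, e.2.1⟩ : {w : V // w ∉ σ.support}))
                (fun e => (⟨r e.1, e.2.2⟩ : {w : V // w ∉ σ.support})) D' = ρ'),
        (-1 : ℤ) ^
          numCircuits (fun e : {e : E // s e ∉ σ.support ∧ r e ∉ σ.support} =>
            (⟨s e.1, e.2.1⟩ : {w : V // w ∉ σ.support})) D' ρ' := by
  simp only [isCircuitConfig_and_inducedPerm_eq_iff]
  rw [sum_configs_eq_sum_isEdgeSection_product hσ hρ', sum_product]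
  simp only [sum_const, nsmul_eq_mul, card_isEdgeSection, sum_neg_distrib, mul_neg, neg_mul]
  rfl

/-- Inductive step: let `σ` be one of the nontrivial disjoint cycles of `ρ`, with support
`S` a proper subset of `V`, and let `ρ'` be the restriction of `ρ` to the restricted graph
on `V' = V \ S` with edge set `E' = {e | s e ∉ S ∧ r e ∉ S}`.  Then the signed count of
circuit configurations inducing `ρ` equals `-(∏ v ∈ S, A v (ρ v))` times the signed count
of circuit configurations of the restricted graph inducing `ρ'`. -/
theorem signed_count_inductive_step {V E : Type*} [Fintype V] [Fintype E] [DecidableEq V]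
    (s r : E → V) (ρ : Equiv.Perm V) (σ : Equiv.Perm V)
    (hσ : σ ∈ ρ.cycleFactorsFinset) (hproper : σ.support ≠ Finset.univ)
    (ρ' : Equiv.Perm {w : V // w ∉ σ.support})
    (hρ' : ∀ w : {w : V // w ∉ σ.support}, (ρ' w : V) = ρ (w : V)) :
    ∑ D ∈ Finset.univ.filter
        (fun D : Finset E => IsCircuitConfig s r D ∧ inducedPerm s r D = ρ),
      (-1 : ℤ) ^ numCircuits s D ρ =
    -(∏ v ∈ σ.support, adjMatrix s r v (ρ v)) *
      ∑ D' ∈ Finset.univ.filter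
          (fun D' : Finset {e : E // s e ∉ σ.support ∧ r e ∉ σ.support} =>
            IsCircuitConfig (fun e => (⟨s e.1, e.2.1⟩ : {w : V // w ∉ σ.support}))
                (fun e => (⟨r e.1, e.2.2⟩ : {w : V // w ∉ σ.support})) D' ∧
              inducedPerm (fun e => (⟨s e.1, e.2.1⟩ : {w : V // w ∉ σ.support}))
                (fun e => (⟨r e.1, e.2.2⟩ : {w : V // w ∉ σ.support})) D' = ρ'),
        (-1 : ℤ) ^
          numCircuits (fun e : {e : E // s e ∉ σ.support ∧ r e ∉ σ.support} =>
            (⟨s e.1, e.2.1⟩ : {w : V // w ∉ σ.support})) D' ρ' :=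
  signed_count_inductive_step_general s r ρ σ hσ ρ' hρ'
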